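/- arXiv:1311.3073 — 3 statements merged into one kernel-verified Lean document; each statement's English description precedes it below -/
import Mathlib

section
/- Let L > 0, β ≥ 0, and G : ℝ → ℝ be a C¹, L-periodic function with G(y) > 0 for all y. Set Y* = {(y,z) ∈ ℝ² : 0 < y < L, −β < z < G(y)}. Let X be a real-valued function, C¹ on an open neighborhood of the closed band {(y,z) : y ∈ ℝ, −β ≤ z ≤ G(y)}, twice differentiable on the open band with ΔX = ∂²_y X + ∂²_z X = 0 there, L-periodic in y (X(y+L, z) = X(y,z) for all (y,z)), and satisfying the Neumann conditions ∂_z X(y, −β) = 0 for all y and ∂_z X(y, G(y)) − G'(y) ∂_y X(y, G(y)) = −G'(y) for all y. Then ∫_{Y*} ( (∂_y X)² + (∂_z X)² ) dy dz = ∫_{Y*} ∂_y X dy dz. -/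
/-!
Since `X` is harmonic, `|∇X|²` is the divergence of `X ∇X`, and `∂_y X` is the divergence of
`(X, 0)`. Gauss–Green on the cell turns both integrals into boundary fluxes: the lateral sides
cancel by periodicity, the bottom contributes nothing because `∂_z X = 0` there, and on the graph
`z = G(y)` the Neumann condition turns the flux `X (∂_z X - G' ∂_y X)` of `X ∇X` into `-G' X`, the
flux of `(X, 0)`.

Gauss–Green on the cell comes from the divergence theorem on a rectangle, pulled back along
`(y, s) ↦ (y, -β + s (G y + β))`. The pulled-back field involves `G'`, so its derivative needs
`G ∈ C²`: for a `C¹` graph, `G` is approximated in `C¹` from below by `C²` periodic functions, and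
both sides of the identity pass to the limit by dominated convergence.
-/

open MeasureTheory Set Filter Topology

def cell (L β : ℝ) (g : ℝ → ℝ) : Set (ℝ × ℝ) :=
  {p | p.1 ∈ Ioo 0 L ∧ p.2 ∈ Ioo (-β) (g p.1)}

def closedCell (L β : ℝ) (g : ℝ → ℝ) : Set (ℝ × ℝ) :=
  {p | p.1 ∈ Icc 0 L ∧ p.2 ∈ Icc (-β) (g p.1)}

section Cell

variable {L β : ℝ} {g G : ℝ → ℝ}

theorem cell_subset_closedCell : cell L β g ⊆ closedCell L β g :=
  fun _ hp => ⟨Ioo_subset_Icc_self hp.1, Ioo_subset_Icc_self hp.2⟩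

theorem cell_mono (h : ∀ y ∈ Ioo 0 L, g y ≤ G y) : cell L β g ⊆ cell L β G :=
  fun p hp => ⟨hp.1, hp.2.1, hp.2.2.trans_le (h p.1 hp.1)⟩

theorem closedCell_mono (h : ∀ y ∈ Icc 0 L, g y ≤ G y) : closedCell L β g ⊆ closedCell L β G :=
  fun p hp => ⟨hp.1, hp.2.1, hp.2.2.trans (h p.1 hp.1)⟩

theorem isOpen_cell (hg : Continuous g) : IsOpen (cell L β g) := by
  have h : cell L β g = Prod.fst ⁻¹' Ioo 0 L ∩ {p | -β < p.2} ∩ {p | p.2 < g p.1} := by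
    ext p; simp [cell, and_assoc]
  rw [h]
  exact ((isOpen_Ioo.preimage continuous_fst).inter
    (isOpen_lt continuous_const continuous_snd)).inter (isOpen_lt continuous_snd (by fun_prop))

theorem isCompact_closedCell (hg : Continuous g) : IsCompact (closedCell L β g) := by
  have h : closedCell L β g = Prod.fst ⁻¹' Icc 0 L ∩ {p | -β ≤ p.2} ∩ {p | p.2 ≤ g p.1} := by
    ext p; simp [closedCell, and_assoc]
  have hclosed : IsClosed (closedCell L β g) := h ▸
    ((isClosed_Icc.preimage continuous_fst).inter
      (isClosed_le continuous_const continuous_snd)).inter (isClosed_le continuous_snd (by fun_prop))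
  obtain ⟨M, hM⟩ := isCompact_Icc.bddAbove_image (hg.continuousOn (s := Icc 0 L))
  refine (isCompact_Icc.prod isCompact_Icc).of_isClosed_subset hclosed (s := Icc 0 L ×ˢ Icc (-β) M) ?_
  exact fun p hp => ⟨hp.1, hp.2.1, hp.2.2.trans (hM (mem_image_of_mem g hp.1))⟩

end Cell

def flatten (β : ℝ) (g : ℝ → ℝ) (x : ℝ × ℝ) : ℝ × ℝ := (x.1, -β + x.2 * (g x.1 + β))

theorem ContinuousLinearMap.det_fst_prod_smul_fst_add_smul_snd (a c : ℝ) :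
    ((ContinuousLinearMap.fst ℝ ℝ ℝ).prod
      (a • ContinuousLinearMap.fst ℝ ℝ ℝ + c • ContinuousLinearMap.snd ℝ ℝ ℝ)).det = c := by
  rw [ContinuousLinearMap.det, ← LinearMap.det_toMatrix (Module.Basis.finTwoProd ℝ),
    Matrix.det_fin_two]
  simp [LinearMap.toMatrix_apply]

section Flatten

variable {L β : ℝ} {g : ℝ → ℝ}

theorem flatten_mem_cell (hgβ : ∀ y ∈ Ioo 0 L, -β < g y) {x : ℝ × ℝ}
    (hx : x ∈ Ioo 0 L ×ˢ Ioo 0 1) : flatten β g x ∈ cell L β g := by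
  obtain ⟨hy, hs0, hs1⟩ := hx
  have hc : 0 < g x.1 + β := by linarith [hgβ x.1 hy]
  exact ⟨hy, by simp only [flatten]; nlinarith, by simp only [flatten]; nlinarith⟩

theorem mapsTo_flatten_closedCell (hgβ : ∀ y ∈ Icc 0 L, -β ≤ g y) :
    MapsTo (flatten β g) (Icc 0 L ×ˢ Icc 0 1) (closedCell L β g) := by
  rintro x ⟨hy, hs0, hs1⟩
  have hc : 0 ≤ g x.1 + β := by linarith [hgβ x.1 hy]
  exact ⟨hy, by simp only [flatten]; nlinarith, by simp only [flatten]; nlinarith⟩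

theorem image_flatten (hgβ : ∀ y ∈ Ioo 0 L, -β < g y) :
    flatten β g '' (Ioo 0 L ×ˢ Ioo 0 1) = cell L β g := by
  refine Subset.antisymm (image_subset_iff.2 fun x hx => flatten_mem_cell hgβ hx) ?_
  rintro ⟨y, z⟩ ⟨hy, hz⟩
  have hc : 0 < g y + β := by linarith [hgβ y hy]
  refine ⟨(y, (z + β) / (g y + β)), ⟨hy, ?_, ?_⟩, ?_⟩
  · exact div_pos (by linarith [hz.1]) hc
  · exact (div_lt_one hc).2 (by linarith [hz.2])
  · simp [flatten, div_mul_cancel₀ _ hc.ne']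

theorem injOn_flatten (hgβ : ∀ y ∈ Ioo 0 L, -β < g y) :
    InjOn (flatten β g) (Ioo 0 L ×ˢ Ioo 0 1) := by
  rintro ⟨y, s⟩ hx ⟨y', s'⟩ - h
  simp only [flatten, Prod.mk.injEq] at h
  obtain ⟨rfl, h⟩ := h
  have hc : g y + β ≠ 0 := by linarith [hgβ y hx.1]
  simpa [hc] using h

theorem flatten_zero (y : ℝ) : flatten β g (y, 0) = (y, -β) := by simp [flatten]

theorem flatten_one (y : ℝ) : flatten β g (y, 1) = (y, g y) := by simp [flatten]

theorem continuous_flatten (hg : Continuous g) : Continuous (flatten β g) := by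
  unfold flatten; fun_prop

theorem hasFDerivAt_flatten {g' : ℝ} {x : ℝ × ℝ} (hg : HasDerivAt g g' x.1) :
    HasFDerivAt (flatten β g) ((ContinuousLinearMap.fst ℝ ℝ ℝ).prod
      ((x.2 * g') • ContinuousLinearMap.fst ℝ ℝ ℝ + (g x.1 + β) • ContinuousLinearMap.snd ℝ ℝ ℝ))
      x := by
  have hc : HasFDerivAt (fun x : ℝ × ℝ => g x.1 + β) (g' • ContinuousLinearMap.fst ℝ ℝ ℝ) x :=
    ((hg.hasFDerivAt.comp x hasFDerivAt_fst).add_const β).congr_fderiv (by ext <;> simp)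
  refine (hasFDerivAt_fst.prodMk ((hasFDerivAt_snd.mul hc).const_add (-β))).congr_fderiv ?_
  ext <;> simp

theorem integral_cell_eq_integral_flatten (hg : Differentiable ℝ g)
    (hgβ : ∀ y ∈ Ioo 0 L, -β < g y) (f : ℝ × ℝ → ℝ) :
    ∫ p in cell L β g, f p = ∫ x in Ioo 0 L ×ˢ Ioo 0 1, (g x.1 + β) * f (flatten β g x) := by
  have hR : MeasurableSet (Ioo 0 L ×ˢ Ioo (0 : ℝ) 1) := measurableSet_Ioo.prod measurableSet_Ioo
  rw [← image_flatten hgβ, integral_image_eq_integral_abs_det_fderiv_smul volume hR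
    (fun x _ => (hasFDerivAt_flatten (hg x.1).hasDerivAt).hasFDerivWithinAt) (injOn_flatten hgβ)]
  refine setIntegral_congr_fun hR fun x hx => ?_
  rw [ContinuousLinearMap.det_fst_prod_smul_fst_add_smul_snd, smul_eq_mul,
    abs_of_pos (by linarith [hgβ x.1 hx.1])]

end Flatten

theorem integral_divergence_Ioo_prod_Ioo {E : Type*} [NormedAddCommGroup E] [NormedSpace ℝ E]
    [CompleteSpace E] {f g D : ℝ × ℝ → E} {a₁ b₁ a₂ b₂ : ℝ}
    (h₁ : a₁ ≤ b₁) (h₂ : a₂ ≤ b₂)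
    (hf : ContinuousOn f (Icc a₁ b₁ ×ˢ Icc a₂ b₂)) (hg : ContinuousOn g (Icc a₁ b₁ ×ˢ Icc a₂ b₂))
    (hdiv : ∀ x ∈ Ioo a₁ b₁ ×ˢ Ioo a₂ b₂, DifferentiableAt ℝ f x ∧ DifferentiableAt ℝ g x ∧
      fderiv ℝ f x (1, 0) + fderiv ℝ g x (0, 1) = D x)
    (hD : IntegrableOn D (Icc a₁ b₁ ×ˢ Icc a₂ b₂)) :
    ∫ x in Ioo a₁ b₁ ×ˢ Ioo a₂ b₂, D x =
      (((∫ x in a₁..b₁, g (x, b₂)) - ∫ x in a₁..b₁, g (x, a₂)) + ∫ y in a₂..b₂, f (b₁, y)) -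
        ∫ y in a₂..b₂, f (a₁, y) := by
  have hae : (Ioo a₁ b₁ ×ˢ Ioo a₂ b₂ : Set (ℝ × ℝ)) =ᵐ[volume] Icc a₁ b₁ ×ˢ Icc a₂ b₂ :=
    Measure.set_prod_ae_eq Ioo_ae_eq_Icc Ioo_ae_eq_Icc
  have hopen : MeasurableSet (Ioo a₁ b₁ ×ˢ Ioo a₂ b₂) := measurableSet_Ioo.prod measurableSet_Ioo
  have hEq : EqOn (fun x => fderiv ℝ f x (1, 0) + fderiv ℝ g x (0, 1)) D
      (Ioo a₁ b₁ ×ˢ Ioo a₂ b₂) := fun x hx => (hdiv x hx).2.2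
  have hint : IntegrableOn (fun x => fderiv ℝ f x (1, 0) + fderiv ℝ g x (0, 1))
      (Icc (a₁, a₂) (b₁, b₂)) := by
    rw [Icc_prod_eq]
    exact ((hD.mono_set (prod_mono Ioo_subset_Icc_self Ioo_subset_Icc_self)).congr_fun hEq.symm
      hopen).congr_set_ae hae.symm
  have h := integral_divergence_prod_Icc_of_hasFDerivAt_of_le f g (fderiv ℝ f) (fderiv ℝ g)
    (a₁, a₂) (b₁, b₂) ⟨h₁, h₂⟩ (by rwa [Icc_prod_eq]) (by rwa [Icc_prod_eq])
    (fun x hx => (hdiv x hx).1.hasFDerivAt) (fun x hx => (hdiv x hx).2.1.hasFDerivAt) hint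
  rw [Icc_prod_eq] at h
  rw [← setIntegral_congr_fun hopen hEq, setIntegral_congr_set hae]
  exact h

theorem ContinuousLinearMap.apply_pair (T : ℝ × ℝ →L[ℝ] ℝ) (u v : ℝ) :
    T (u, v) = u * T (1, 0) + v * T (0, 1) := by
  rw [← smul_eq_mul, ← smul_eq_mul, ← map_smul, ← map_smul, ← map_add]
  simp

-- The Piola transform of `(P, Q)` along `flatten β g`: the adjugate of its Jacobian matrix applied
-- to `(P, Q) ∘ flatten β g`, so that divergences get multiplied by the Jacobian `g y + β`.
def piolaFst (β : ℝ) (g : ℝ → ℝ) (P : ℝ × ℝ → ℝ) (x : ℝ × ℝ) : ℝ :=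
  (g x.1 + β) * P (flatten β g x)

noncomputable def piolaSnd (β : ℝ) (g : ℝ → ℝ) (P Q : ℝ × ℝ → ℝ) (x : ℝ × ℝ) : ℝ :=
  -(x.2 * deriv g x.1) * P (flatten β g x) + Q (flatten β g x)

theorem piola_divergence {β : ℝ} {g : ℝ → ℝ} {P Q : ℝ × ℝ → ℝ} (hg : ContDiff ℝ 2 g) {x : ℝ × ℝ}
    (hP : DifferentiableAt ℝ P (flatten β g x)) (hQ : DifferentiableAt ℝ Q (flatten β g x)) :
    DifferentiableAt ℝ (piolaFst β g P) x ∧ DifferentiableAt ℝ (piolaSnd β g P Q) x ∧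
      fderiv ℝ (piolaFst β g P) x (1, 0) + fderiv ℝ (piolaSnd β g P Q) x (0, 1) =
        (g x.1 + β) * (fderiv ℝ P (flatten β g x) (1, 0) + fderiv ℝ Q (flatten β g x) (0, 1)) := by
  have hg₁ : HasDerivAt g (deriv g x.1) x.1 := (hg.differentiable two_ne_zero x.1).hasDerivAt
  have hg₂ := (hg.differentiable_deriv_two x.1).hasDerivAt
  have hΦ := hasFDerivAt_flatten (β := β) hg₁
  have hPΦ := hP.hasFDerivAt.comp x hΦ
  have hQΦ := hQ.hasFDerivAt.comp x hΦ
  have hF : HasFDerivAt (piolaFst β g P) _ x :=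
    ((hg₁.hasFDerivAt.comp x hasFDerivAt_fst).add_const β).mul hPΦ
  have hG : HasFDerivAt (piolaSnd β g P Q) _ x :=
    ((hasFDerivAt_snd.mul (hg₂.hasFDerivAt.comp x hasFDerivAt_fst)).neg.mul hPΦ).add hQΦ
  refine ⟨hF.differentiableAt, hG.differentiableAt, ?_⟩
  rw [hF.fderiv, hG.fderiv]
  simp only [Function.comp_apply, add_apply, smul_apply, ContinuousLinearMap.comp_apply,
    ContinuousLinearMap.prod_apply, ContinuousLinearMap.coe_fst', ContinuousLinearMap.coe_snd',
    ContinuousLinearMap.toSpanSingleton_apply, Pi.neg_apply, Pi.mul_apply, neg_apply, smul_eq_mul,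
    mul_one, mul_zero, add_zero, zero_add, zero_mul, one_mul]
  rw [(fderiv ℝ P _).apply_pair 1, (fderiv ℝ P _).apply_pair 0 (g x.1 + β),
    (fderiv ℝ Q _).apply_pair 0]
  simp
  ring

theorem integral_divergence_cell_of_contDiff_two {L β : ℝ} {g : ℝ → ℝ} {P Q D : ℝ × ℝ → ℝ}
    (hL : 0 ≤ L) (hg : ContDiff ℝ 2 g) (hgL : g L = g 0) (hgβ : ∀ y ∈ Icc 0 L, -β < g y)
    (hP : ContinuousOn P (closedCell L β g)) (hQ : ContinuousOn Q (closedCell L β g))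
    (hD : ContinuousOn D (closedCell L β g))
    (hdiv : ∀ p ∈ cell L β g, DifferentiableAt ℝ P p ∧ DifferentiableAt ℝ Q p ∧
      fderiv ℝ P p (1, 0) + fderiv ℝ Q p (0, 1) = D p)
    (hper : ∀ z ∈ Icc (-β) (g 0), P (L, z) = P (0, z)) :
    ∫ p in cell L β g, D p =
      (∫ y in 0..L, (Q (y, g y) - deriv g y * P (y, g y))) - ∫ y in 0..L, Q (y, -β) := by
  have hgβ' : ∀ y ∈ Ioo 0 L, -β < g y := fun y hy => hgβ y (Ioo_subset_Icc_self hy)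
  have hmaps := mapsTo_flatten_closedCell (fun y hy => (hgβ y hy).le)
  have hΦ := (continuous_flatten (β := β) hg.continuous).continuousOn (s := Icc 0 L ×ˢ Icc 0 1)
  have hg' : Continuous (deriv g) := hg.continuous_deriv one_le_two
  have hside : ∀ s ∈ Icc (0 : ℝ) 1, piolaFst β g P (L, s) = piolaFst β g P (0, s) := by
    intro s hs
    have hz := (hmaps (x := (0, s)) ⟨left_mem_Icc.2 hL, hs⟩).2
    simp only [piolaFst, flatten, hgL] at hz ⊢
    rw [hper _ hz]
  rw [integral_cell_eq_integral_flatten (hg.differentiable two_ne_zero) hgβ',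
    integral_divergence_Ioo_prod_Ioo (f := piolaFst β g P) (g := piolaSnd β g P Q)
      (D := fun x => (g x.1 + β) * D (flatten β g x)) hL zero_le_one
      ((by fun_prop : Continuous fun x : ℝ × ℝ => g x.1 + β).continuousOn.mul (hP.comp hΦ hmaps))
      (((by fun_prop : Continuous fun x : ℝ × ℝ => -(x.2 * deriv g x.1)).continuousOn.mul
        (hP.comp hΦ hmaps)).add (hQ.comp hΦ hmaps))
      (fun x hx => by
        obtain ⟨hPd, hQd, hPQ⟩ := hdiv _ (flatten_mem_cell hgβ' hx)
        simpa only [hPQ] using piola_divergence hg hPd hQd)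
      (((by fun_prop : Continuous fun x : ℝ × ℝ => g x.1 + β).continuousOn.mul
        (hD.comp hΦ hmaps)).integrableOn_compact (isCompact_Icc.prod isCompact_Icc)),
    intervalIntegral.integral_congr fun s hs => hside s (by rwa [uIcc_of_le zero_le_one] at hs)]
  simp [piolaSnd, flatten_zero, flatten_one, neg_mul, neg_add_eq_sub]

theorem exists_contDiff_two_near_of_integral_eq_zero {L δ : ℝ} (hL : 0 < L) (hδ : 0 < δ)
    {f : ℝ → ℝ} (hf : Continuous f) (hf0 : ∫ t in 0..L, f t = 0) :
    ∃ ψ : ℝ → ℝ, ContDiff ℝ 2 ψ ∧ ψ 0 = 0 ∧ ψ L = 0 ∧ ∀ y ∈ Icc 0 L, |deriv ψ y - f y| ≤ δ := by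
  obtain ⟨q, hq⟩ :=
    exists_polynomial_near_of_continuousOn 0 L f hf.continuousOn (δ / 2) (half_pos hδ)
  set c := (∫ t in 0..L, q.eval t) / L
  have hqc : Continuous fun t => q.eval t - c := q.continuous.sub continuous_const
  have hc : |c| ≤ δ / 2 := by
    have h : ∫ t in 0..L, q.eval t = ∫ t in 0..L, (q.eval t - f t) := by
      rw [intervalIntegral.integral_sub (q.continuous.intervalIntegrable 0 L)
        (hf.intervalIntegrable 0 L), hf0, sub_zero]
    rw [abs_div, abs_of_pos hL, div_le_iff₀ hL, h]
    have := intervalIntegral.norm_integral_le_of_norm_le_const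
      (f := fun t => q.eval t - f t) fun t ht => by
        rw [Real.norm_eq_abs]
        exact (hq t (Ioc_subset_Icc_self (by rwa [uIoc_of_le hL.le] at ht))).le
    rwa [sub_zero, abs_of_pos hL] at this
  have hderiv : deriv (fun y => ∫ t in 0..y, (q.eval t - c)) = fun y => q.eval y - c :=
    funext (hqc.deriv_integral _ 0)
  refine ⟨fun y => ∫ t in 0..y, (q.eval t - c), ?_, intervalIntegral.integral_same, ?_,
    fun y hy => ?_⟩
  · rw [show (2 : WithTop ℕ∞) = 1 + 1 from rfl, contDiff_succ_iff_deriv, hderiv]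
    refine ⟨fun y => (hqc.integral_hasStrictDerivAt 0 y).hasDerivAt.differentiableAt, by simp, ?_⟩
    simpa using (q.contDiff_aeval 1).sub (contDiff_const (c := c))
  · show ∫ t in 0..L, (q.eval t - c) = 0
    rw [intervalIntegral.integral_sub (q.continuous.intervalIntegrable 0 L)
      intervalIntegrable_const, intervalIntegral.integral_const, smul_eq_mul, sub_zero, show L * c = ∫ t in 0..L, q.eval t from mul_div_cancel₀ _ hL.ne', sub_self]
  · rw [hderiv]
    calc |q.eval y - c - f y| ≤ |q.eval y - f y| + |c| := by
          simpa [sub_right_comm] using abs_sub (q.eval y - f y) c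
      _ ≤ δ := by linarith [(hq y hy).le]

theorem exists_contDiff_two_approx {L ε : ℝ} (hL : 0 < L) (hε : 0 < ε) {G : ℝ → ℝ}
    (hG : ContDiff ℝ 1 G) (hGL : G L = G 0) :
    ∃ g : ℝ → ℝ, ContDiff ℝ 2 g ∧ g L = g 0 ∧
      ∀ y ∈ Icc 0 L, G y - ε ≤ g y ∧ g y < G y ∧ |deriv g y - deriv G y| ≤ ε := by
  have hG' := hG.continuous_deriv le_rfl
  have hGd := hG.differentiable one_ne_zero
  set δ := ε / (2 * L + 2)
  have hδε : δ * (2 * L + 2) = ε := div_mul_cancel₀ _ (by positivity)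
  obtain ⟨ψ, hψ, hψ0, hψL, hψG⟩ := exists_contDiff_two_near_of_integral_eq_zero hL
    (by positivity : 0 < δ) hG'
    (by rw [intervalIntegral.integral_deriv_eq_sub (fun x _ => hGd x) (hG'.intervalIntegrable _ _),
      hGL, sub_self])
  have hψd := hψ.differentiable two_ne_zero
  have hclose : ∀ y ∈ Icc 0 L, |ψ y - G y - (ψ 0 - G 0)| ≤ δ * (y - 0) :=
    norm_image_sub_le_of_norm_deriv_le_segment' (f := fun y => ψ y - G y)
      (fun x _ => ((hψd x).hasDerivAt.sub (hGd x).hasDerivAt).hasDerivWithinAt)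
      (fun x hx => hψG x (Ico_subset_Icc_self hx))
  refine ⟨fun y => G 0 - δ * (L + 1) + ψ y, contDiff_const.add hψ, by simp [hψ0, hψL],
    fun y hy => ?_⟩
  have h1 := abs_le.1 (hclose y hy)
  have h2 := hψG y hy
  rw [deriv_const_add]
  refine ⟨by nlinarith [hy.2], by nlinarith [hy.2], by nlinarith⟩

theorem exists_seq_contDiff_two_tendsto {L β : ℝ} (hL : 0 < L) {G : ℝ → ℝ}
    (hG : ContDiff ℝ 1 G) (hGL : G L = G 0) (hGβ : ∀ y ∈ Icc 0 L, -β < G y) :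
    ∃ g : ℕ → ℝ → ℝ, (∀ n, ContDiff ℝ 2 (g n)) ∧ (∀ n, g n L = g n 0) ∧
      (∀ n, ∀ y ∈ Icc 0 L, -β < g n y ∧ g n y < G y) ∧
      (∀ y ∈ Icc 0 L, Tendsto (fun n => g n y) atTop (𝓝 (G y))) ∧
      (∀ y ∈ Icc 0 L, Tendsto (fun n => deriv (g n) y) atTop (𝓝 (deriv G y))) ∧
      ∃ C, ∀ n, ∀ y ∈ Icc 0 L, |deriv (g n) y| ≤ C := by
  obtain ⟨y₀, hy₀, hmin⟩ := isCompact_Icc.exists_isMinOn (nonempty_Icc.2 hL.le)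
    (hG.continuous.add continuous_const : Continuous fun y => G y + β).continuousOn
  set m := G y₀ + β
  have hm : 0 < m := by linarith [hGβ y₀ hy₀]
  set ε : ℕ → ℝ := fun n => m / 2 * (1 / (n + 1))
  have hε0 : ∀ n, 0 < ε n := fun n => by positivity
  have hεm n : ε n < m := calc
    ε n ≤ m / 2 := mul_le_of_le_one_right (by positivity)
      (div_le_one_of_le₀ (le_add_of_nonneg_left n.cast_nonneg) (by positivity))
    _ < m := half_lt_self hm
  have hε : Tendsto ε atTop (𝓝 0) := by
    have := tendsto_one_div_add_atTop_nhds_zero_nat.const_mul (m / 2)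
    rwa [mul_zero] at this
  choose g hg hgL hgG using fun n => exists_contDiff_two_approx hL (hε0 n) hG hGL
  obtain ⟨C, hC⟩ := isCompact_Icc.exists_bound_of_continuousOn
    (hG.continuous_deriv le_rfl).continuousOn (s := Icc 0 L)
  refine ⟨g, hg, hgL, fun n y hy => ⟨?_, (hgG n y hy).2.1⟩, fun y hy => ?_, fun y hy => ?_,
    C + m, fun n y hy => ?_⟩
  · have : m ≤ G y + β := hmin hy
    linarith [(hgG n y hy).1, hεm n]
  · refine tendsto_iff_norm_sub_tendsto_zero.2 (squeeze_zero (fun n => norm_nonneg _)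
      (fun n => ?_) hε)
    rw [Real.norm_eq_abs, abs_le]
    constructor <;> linarith [(hgG n y hy).1, (hgG n y hy).2.1, hε0 n]
  · exact tendsto_iff_norm_sub_tendsto_zero.2 (squeeze_zero (fun n => norm_nonneg _)
      (fun n => (hgG n y hy).2.2) hε)
  · have h1 := abs_le.1 (hgG n y hy).2.2
    have h2 := abs_le.1 (hC y hy)
    rw [abs_le]
    constructor <;> linarith [hεm n]

theorem tendsto_setIntegral_of_subset_of_eventually_mem {α E : Type*} [MeasurableSpace α]
    [NormedAddCommGroup E] [NormedSpace ℝ E] {μ : Measure α} {s : ℕ → Set α} {t : Set α}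
    {f : α → E} (hs : ∀ n, MeasurableSet (s n)) (ht : MeasurableSet t) (hst : ∀ n, s n ⊆ t)
    (hmem : ∀ x ∈ t, ∀ᶠ n in atTop, x ∈ s n) (hf : IntegrableOn f t μ) :
    Tendsto (fun n => ∫ x in s n, f x ∂μ) atTop (𝓝 (∫ x in t, f x ∂μ)) := by
  simp_rw [← integral_indicator (hs _), ← integral_indicator ht]
  refine tendsto_integral_of_dominated_convergence (t.indicator fun x => ‖f x‖)
    (fun n => ((hf.mono_set (hst n)).integrable_indicator (hs n)).aestronglyMeasurable)
    (IntegrableOn.integrable_indicator hf.norm ht) (fun n => Eventually.of_forall fun x => ?_)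
    (Eventually.of_forall fun x => ?_)
  · rw [norm_indicator_eq_indicator_norm]
    exact indicator_le_indicator_of_subset (hst n) (fun _ => norm_nonneg _) x
  · by_cases hx : x ∈ t
    · rw [indicator_of_mem hx]
      exact tendsto_const_nhds.congr' ((hmem x hx).mono fun n hn => (indicator_of_mem hn f).symm)
    · simp only [indicator_of_notMem hx, indicator_of_notMem (fun h => hx (hst _ h))]
      exact tendsto_const_nhds

theorem tendsto_integral_flux {L β C : ℝ} (hL : 0 ≤ L) {G : ℝ → ℝ} (hG : Continuous G)
    {g : ℕ → ℝ → ℝ} {P Q : ℝ × ℝ → ℝ}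
    (hP : ContinuousOn P (closedCell L β G)) (hQ : ContinuousOn Q (closedCell L β G))
    (hg : ∀ n, ContDiff ℝ 1 (g n)) (hgG : ∀ n, ∀ y ∈ Icc 0 L, -β ≤ g n y ∧ g n y ≤ G y)
    (hlim : ∀ y ∈ Icc 0 L, Tendsto (fun n => g n y) atTop (𝓝 (G y)))
    (hlim' : ∀ y ∈ Icc 0 L, Tendsto (fun n => deriv (g n) y) atTop (𝓝 (deriv G y)))
    (hC : ∀ n, ∀ y ∈ Icc 0 L, |deriv (g n) y| ≤ C) :
    Tendsto (fun n => ∫ y in 0..L, (Q (y, g n y) - deriv (g n) y * P (y, g n y))) atTop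
      (𝓝 (∫ y in 0..L, (Q (y, G y) - deriv G y * P (y, G y)))) := by
  have hK := isCompact_closedCell (L := L) (β := β) hG
  obtain ⟨CP, hCP⟩ := hK.exists_bound_of_continuousOn hP
  obtain ⟨CQ, hCQ⟩ := hK.exists_bound_of_continuousOn hQ
  have hmem : ∀ n, ∀ y ∈ Icc 0 L, (y, g n y) ∈ closedCell L β G := fun n y hy => ⟨hy, hgG n y hy⟩
  have hcont : ∀ n, ContinuousOn (fun y => Q (y, g n y) - deriv (g n) y * P (y, g n y))
      (Icc 0 L) := fun n =>
    (hQ.comp (continuous_id.prodMk (hg n).continuous).continuousOn (hmem n)).sub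
      (((hg n).continuous_deriv le_rfl).continuousOn.mul
        (hP.comp (continuous_id.prodMk (hg n).continuous).continuousOn (hmem n)))
  refine intervalIntegral.tendsto_integral_filter_of_dominated_convergence (fun _ => CQ + C * CP)
    (Eventually.of_forall fun n => ?_) (Eventually.of_forall fun n => ?_) intervalIntegrable_const
    ?_
  · rw [uIoc_of_le hL]
    exact ((hcont n).mono Ioc_subset_Icc_self).aestronglyMeasurable measurableSet_Ioc
  · refine Eventually.of_forall fun y hy => ?_
    rw [uIoc_of_le hL] at hy
    have hy := Ioc_subset_Icc_self hy
    calc ‖Q (y, g n y) - deriv (g n) y * P (y, g n y)‖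
        ≤ ‖Q (y, g n y)‖ + |deriv (g n) y| * ‖P (y, g n y)‖ := by
          simpa [norm_mul] using norm_sub_le (Q (y, g n y)) (deriv (g n) y * P (y, g n y))
      _ ≤ CQ + C * CP := by
          gcongr
          · exact hCQ _ (hmem n y hy)
          · exact (abs_nonneg _).trans (hC n y hy)
          · exact hC n y hy
          · exact hCP _ (hmem n y hy)
  · refine Eventually.of_forall fun y hy => ?_
    rw [uIoc_of_le hL] at hy
    have hy := Ioc_subset_Icc_self hy
    have hG_mem : (y, G y) ∈ closedCell L β G :=
      ⟨hy, (hgG 0 y hy).1.trans (hgG 0 y hy).2, le_rfl⟩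
    have hpt : Tendsto (fun n => (y, g n y)) atTop (𝓝[closedCell L β G] (y, G y)) :=
      tendsto_nhdsWithin_iff.2 ⟨tendsto_const_nhds.prodMk_nhds (hlim y hy),
        Eventually.of_forall fun n => hmem n y hy⟩
    exact ((hQ _ hG_mem).tendsto.comp hpt).sub ((hlim' y hy).mul ((hP _ hG_mem).tendsto.comp hpt))

theorem integral_divergence_cell {L β : ℝ} {G : ℝ → ℝ} {P Q D : ℝ × ℝ → ℝ}
    (hL : 0 < L) (hG : ContDiff ℝ 1 G) (hGL : G L = G 0) (hGβ : ∀ y ∈ Icc 0 L, -β < G y)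
    (hP : ContinuousOn P (closedCell L β G)) (hQ : ContinuousOn Q (closedCell L β G))
    (hD : ContinuousOn D (closedCell L β G))
    (hdiv : ∀ p ∈ cell L β G, DifferentiableAt ℝ P p ∧ DifferentiableAt ℝ Q p ∧
      fderiv ℝ P p (1, 0) + fderiv ℝ Q p (0, 1) = D p)
    (hper : ∀ z ∈ Icc (-β) (G 0), P (L, z) = P (0, z)) :
    ∫ p in cell L β G, D p =
      (∫ y in 0..L, (Q (y, G y) - deriv G y * P (y, G y))) - ∫ y in 0..L, Q (y, -β) := by
  obtain ⟨g, hg, hgL, hgG, hlim, hlim', C, hC⟩ := exists_seq_contDiff_two_tendsto hL hG hGL hGβ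
  have hcell n : cell L β (g n) ⊆ cell L β G :=
    cell_mono fun y hy => (hgG n y (Ioo_subset_Icc_self hy)).2.le
  have hclosed n : closedCell L β (g n) ⊆ closedCell L β G :=
    closedCell_mono fun y hy => (hgG n y hy).2.le
  have hn n : ∫ p in cell L β (g n), D p =
      (∫ y in 0..L, (Q (y, g n y) - deriv (g n) y * P (y, g n y))) - ∫ y in 0..L, Q (y, -β) :=
    integral_divergence_cell_of_contDiff_two hL.le (hg n) (hgL n) (fun y hy => (hgG n y hy).1)
      (hP.mono (hclosed n)) (hQ.mono (hclosed n)) (hD.mono (hclosed n))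
      (fun p hp => hdiv p (hcell n hp))
      (fun z hz => hper z ⟨hz.1, hz.2.trans (hgG n 0 (left_mem_Icc.2 hL.le)).2.le⟩)
  have harea : Tendsto (fun n => ∫ p in cell L β (g n), D p) atTop (𝓝 (∫ p in cell L β G, D p)) :=
    tendsto_setIntegral_of_subset_of_eventually_mem
      (fun n => (isOpen_cell (hg n).continuous).measurableSet)
      (isOpen_cell hG.continuous).measurableSet hcell
      (fun p hp => ((hlim p.1 (Ioo_subset_Icc_self hp.1)).eventually (lt_mem_nhds hp.2.2)).mono
        fun n hn => ⟨hp.1, hp.2.1, hn⟩)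
      ((hD.integrableOn_compact (isCompact_closedCell hG.continuous)).mono_set
        cell_subset_closedCell)
  have hflux := tendsto_integral_flux hL.le hG.continuous hP hQ (fun n => (hg n).of_le one_le_two)
    (fun n y hy => ⟨(hgG n y hy).1.le, (hgG n y hy).2.le⟩) hlim hlim' hC
  exact tendsto_nhds_unique (harea.congr hn) (hflux.sub_const _)

theorem Function.Periodic.fderiv {𝕜 E F : Type*} [NontriviallyNormedField 𝕜]
    [NormedAddCommGroup E] [NormedSpace 𝕜 E] [NormedAddCommGroup F] [NormedSpace 𝕜 F]
    {f : E → F} {c : E} (hf : Function.Periodic f c) : Function.Periodic (fderiv 𝕜 f) c :=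
  fun x => by
    rw [← fderiv_comp_add_right]
    exact congrArg (_root_.fderiv 𝕜 · x) (funext hf)

theorem divergence_mul_grad_of_laplacian_eq_zero {X : ℝ × ℝ → ℝ} {p : ℝ × ℝ} (hX : DifferentiableAt ℝ X p)
    (hXy : DifferentiableAt ℝ (fun q => fderiv ℝ X q (1, 0)) p)
    (hXz : DifferentiableAt ℝ (fun q => fderiv ℝ X q (0, 1)) p)
    (hharm : fderiv ℝ (fun q => fderiv ℝ X q (1, 0)) p (1, 0)
      + fderiv ℝ (fun q => fderiv ℝ X q (0, 1)) p (0, 1) = 0) :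
    DifferentiableAt ℝ (fun q => X q * fderiv ℝ X q (1, 0)) p ∧
      DifferentiableAt ℝ (fun q => X q * fderiv ℝ X q (0, 1)) p ∧
      fderiv ℝ (fun q => X q * fderiv ℝ X q (1, 0)) p (1, 0)
        + fderiv ℝ (fun q => X q * fderiv ℝ X q (0, 1)) p (0, 1)
        = fderiv ℝ X p (1, 0) ^ 2 + fderiv ℝ X p (0, 1) ^ 2 := by
  refine ⟨hX.mul hXy, hX.mul hXz, ?_⟩
  rw [fderiv_fun_mul hX hXy, fderiv_fun_mul hX hXz]
  simp only [add_apply, smul_apply, smul_eq_mul]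
  linear_combination X p * hharm

/-- Energy identity for the cell problem: if `X` is `C¹` on a neighborhood of the
closed band `{(y,z) : -β ≤ z ≤ G(y)}`, `L`-periodic in `y`, harmonic on the open band, and
satisfies the Neumann conditions `∂_z X(y,-β) = 0` and
`∂_z X(y,G(y)) - G'(y) ∂_y X(y,G(y)) = -G'(y)`, then
`∫_{Y*} ((∂_y X)² + (∂_z X)²) = ∫_{Y*} ∂_y X`, where
`Y* = {(y,z) : 0 < y < L, -β < z < G(y)}`. -/
theorem stmt_4 (L β : ℝ) (hL : 0 < L) (hβ : 0 ≤ β)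
    (G : ℝ → ℝ) (hGC1 : ContDiff ℝ 1 G) (hGper : ∀ y, G (y + L) = G y)
    (hGpos : ∀ y, 0 < G y)
    (X : ℝ × ℝ → ℝ)
    (hX : ∃ U : Set (ℝ × ℝ), IsOpen U ∧
      {p : ℝ × ℝ | -β ≤ p.2 ∧ p.2 ≤ G p.1} ⊆ U ∧ ContDiffOn ℝ 1 X U)
    (hXtwice : ∀ p : ℝ × ℝ, -β < p.2 → p.2 < G p.1 →
      DifferentiableAt ℝ (fun q : ℝ × ℝ => fderiv ℝ X q (1, 0)) p ∧
      DifferentiableAt ℝ (fun q : ℝ × ℝ => fderiv ℝ X q (0, 1)) p)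
    (hXharm : ∀ p : ℝ × ℝ, -β < p.2 → p.2 < G p.1 →
      fderiv ℝ (fun q : ℝ × ℝ => fderiv ℝ X q (1, 0)) p (1, 0)
        + fderiv ℝ (fun q : ℝ × ℝ => fderiv ℝ X q (0, 1)) p (0, 1) = 0)
    (hXper : ∀ y z : ℝ, X (y + L, z) = X (y, z))
    (hXlower : ∀ y : ℝ, fderiv ℝ X (y, -β) (0, 1) = 0)
    (hXupper : ∀ y : ℝ,
      fderiv ℝ X (y, G y) (0, 1) - deriv G y * fderiv ℝ X (y, G y) (1, 0) = -deriv G y) :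
    ∫ p in {p : ℝ × ℝ | p.1 ∈ Ioo 0 L ∧ p.2 ∈ Ioo (-β) (G p.1)},
        (fderiv ℝ X p (1, 0) ^ 2 + fderiv ℝ X p (0, 1) ^ 2)
      = ∫ p in {p : ℝ × ℝ | p.1 ∈ Ioo 0 L ∧ p.2 ∈ Ioo (-β) (G p.1)}, fderiv ℝ X p (1, 0) := by
  obtain ⟨U, hU, hKU, hXU⟩ := hX
  have hK : closedCell L β G ⊆ U := fun p hp => hKU hp.2
  have hXd p (hp : p ∈ closedCell L β G) : DifferentiableAt ℝ X p :=
    (hXU.differentiableOn one_ne_zero p (hK hp)).differentiableAt (hU.mem_nhds (hK hp))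
  have hX' := (hXU.continuousOn_fderiv_of_isOpen hU le_rfl).mono hK
  have hXc := hXU.continuousOn.mono hK
  have hXy := hX'.clm_apply (continuousOn_const (c := ((1, 0) : ℝ × ℝ)))
  have hXz := hX'.clm_apply (continuousOn_const (c := ((0, 1) : ℝ × ℝ)))
  have hXper' : Function.Periodic X (L, 0) := fun ⟨y, z⟩ => by simpa using hXper y z
  have hXL z : X (L, z) = X (0, z) := by simpa using hXper' (0, z)
  have hX'L z : fderiv ℝ X (L, z) = fderiv ℝ X (0, z) := by simpa using hXper'.fderiv (0, z)
  have hGL : G L = G 0 := by simpa using hGper 0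
  have hGβ : ∀ y ∈ Icc 0 L, -β < G y := fun y _ => by linarith [hGpos y]
  have henergy := integral_divergence_cell (P := fun q => X q * fderiv ℝ X q (1, 0))
    (Q := fun q => X q * fderiv ℝ X q (0, 1))
    (D := fun q => fderiv ℝ X q (1, 0) ^ 2 + fderiv ℝ X q (0, 1) ^ 2) hL hGC1 hGL hGβ
    (hXc.mul hXy) (hXc.mul hXz) ((hXy.pow 2).add (hXz.pow 2))
    (fun p hp => divergence_mul_grad_of_laplacian_eq_zero (hXd p (cell_subset_closedCell hp))
      (hXtwice p hp.2.1 hp.2.2).1 (hXtwice p hp.2.1 hp.2.2).2 (hXharm p hp.2.1 hp.2.2))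
    (fun z _ => by simp only [hXL, hX'L])
  have hmean := integral_divergence_cell (Q := fun _ => 0) hL hGC1 hGL hGβ hXc
    continuousOn_const hXy
    (fun p hp => ⟨hXd p (cell_subset_closedCell hp), differentiableAt_const _, by simp⟩)
    (fun z _ => hXL z)
  change ∫ p in cell L β G, _ = ∫ p in cell L β G, _
  rw [henergy, hmean]
  simp only [hXlower, mul_zero, intervalIntegral.integral_zero, sub_zero]
  refine intervalIntegral.integral_congr fun y _ => ?_
  linear_combination X (y, G y) * hXupper y
end

section
/- Let L > 0, b₁ ≥ 0, G₁ > 0, and let F : ℝ² → ℝ be measurable with F(y + L, z) = F(y, z) for all (y,z) and M := ∫_{(0,L) × (−b₁, G₁)} F(y,z)² dy dz < ∞. Then for every ε ∈ (0,1] and every measurable set R ⊂ (0,1) × (−ε b₁, ε G₁), one has ∫_R F(x₁/ε, x₂/ε)² dx₁ dx₂ ≤ ε (1/L + 1) M. -/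
/-!
The substitution `x = ε y` turns the integral over `R` into `ε²` times the integral of `F²`
over `ε⁻¹ R ⊆ (0, ε⁻¹) × (-b₁, G₁)`. That rectangle is covered by `n = ⌈(ε L)⁻¹⌉` periods
`[k L, (k + 1) L) × (-b₁, G₁)`, each carrying the mass `M` by periodicity, and
`ε² n ≤ ε / L + ε² ≤ ε (1 / L + 1)`.
-/
open MeasureTheory Set Module
open scoped ENNReal

theorem MeasureTheory.Measure.setLIntegral_comp_smul_preimage {E : Type*} [NormedAddCommGroup E]
    [NormedSpace ℝ E] [MeasurableSpace E] [BorelSpace E] [FiniteDimensional ℝ E]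
    (μ : Measure E) [μ.IsAddHaarMeasure] {r : ℝ} (hr : r ≠ 0) (f : E → ℝ≥0∞) (s : Set E) :
    ∫⁻ x in (r • ·) ⁻¹' s, f (r • x) ∂μ
      = ENNReal.ofReal |(r ^ finrank ℝ E)⁻¹| * ∫⁻ y in s, f y ∂μ := by
  have he : MeasurableEmbedding (r • · : E → E) := (MeasurableEquiv.smul₀ r hr).measurableEmbedding
  rw [← he.lintegral_map, ← he.restrict_map, Measure.map_addHaar_smul μ hr, Measure.restrict_smul,
    lintegral_smul_measure, smul_eq_mul]

section Periodic

variable {G : ℝ × ℝ → ℝ≥0∞} {L : ℝ}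

theorem setLIntegral_preimage_add_const_prod (hper : ∀ y z, G (y + L, z) = G (y, z))
    (s t : Set ℝ) : ∫⁻ p in ((· + L) ⁻¹' s) ×ˢ t, G p = ∫⁻ p in s ×ˢ t, G p := by
  have hpre : (· + ((L, 0) : ℝ × ℝ)) ⁻¹' (s ×ˢ t) = ((· + L) ⁻¹' s) ×ˢ t := by ext; simp
  calc ∫⁻ p in ((· + L) ⁻¹' s) ×ˢ t, G p
      = ∫⁻ p in (· + ((L, 0) : ℝ × ℝ)) ⁻¹' (s ×ˢ t), G (p + (L, 0)) := by
        rw [hpre]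
        congr 1
        funext ⟨y, z⟩
        simp [hper]
    _ = ∫⁻ p in s ×ˢ t, G p :=
        (measurePreserving_add_right volume _).setLIntegral_comp_preimage_emb
          (measurableEmbedding_addRight _) G _

theorem setLIntegral_Ico_nat_mul_prod (hL : 0 ≤ L) (hper : ∀ y z, G (y + L, z) = G (y, z))
    {t : Set ℝ} (ht : MeasurableSet t) (n : ℕ) :
    ∫⁻ p in Ico 0 (n * L) ×ˢ t, G p = n * ∫⁻ p in Ico 0 L ×ˢ t, G p := by
  induction n with
  | zero => simp
  | succ n ih =>
    have hsplit : Ico 0 ((n + 1 : ℕ) * L) = Ico 0 L ∪ Ico L ((n + 1 : ℕ) * L) :=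
      (Ico_union_Ico_eq_Ico hL (by push_cast; nlinarith [n.cast_nonneg (α := ℝ)])).symm
    have hshift : (· + L) ⁻¹' Ico L ((n + 1 : ℕ) * L) = Ico 0 (n * L) := by
      rw [preimage_add_const_Ico]; push_cast; ring_nf
    rw [hsplit, union_prod, lintegral_union (measurableSet_Ico.prod ht)
      (Ico_disjoint_Ico_same.set_prod_left _ _),
      ← setLIntegral_preimage_add_const_prod hper (Ico L _),
      hshift, ih]
    push_cast; ring

end Periodic

theorem restrict_Ioo_prod_eq_restrict_Ico_prod (a b : ℝ) (t : Set ℝ) :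
    (volume : Measure (ℝ × ℝ)).restrict (Ioo a b ×ˢ t) = volume.restrict (Ico a b ×ˢ t) := by
  rw [Measure.volume_eq_prod, ← Measure.prod_restrict, ← Measure.prod_restrict,
    Measure.restrict_congr_set Ioo_ae_eq_Ico]

theorem sq_mul_natCeil_inv_mul_le {ε L : ℝ} (hε : 0 < ε) (hε1 : ε ≤ 1) (hL : 0 < L) :
    ε ^ 2 * ⌈(ε * L)⁻¹⌉₊ ≤ ε * (1 / L + 1) := by
  have hceil : (⌈(ε * L)⁻¹⌉₊ : ℝ) < (ε * L)⁻¹ + 1 := Nat.ceil_lt_add_one (by positivity)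
  calc ε ^ 2 * ⌈(ε * L)⁻¹⌉₊ ≤ ε ^ 2 * ((ε * L)⁻¹ + 1) := by gcongr
    _ = ε / L + ε * ε := by field_simp
    _ ≤ ε / L + ε := by gcongr; nlinarith
    _ = ε * (1 / L + 1) := by ring

theorem Ioo_prod_Ioo_subset_preimage_inv_smul {ε L a b : ℝ} (hε : 0 < ε) (hL : 0 < L) :
    Ioo 0 1 ×ˢ Ioo (-(ε * a)) (ε * b)
      ⊆ (ε⁻¹ • ·) ⁻¹' (Ico 0 (⌈(ε * L)⁻¹⌉₊ * L) ×ˢ Ioo (-a) b) := by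
  rintro p ⟨⟨hx₀, hx₁⟩, hy₀, hy₁⟩
  have hnL : ε⁻¹ ≤ ⌈(ε * L)⁻¹⌉₊ * L := by
    rw [← div_le_iff₀ hL, div_eq_mul_inv, ← mul_inv]; exact Nat.le_ceil _
  simp only [mem_preimage, Prod.smul_fst, Prod.smul_snd, smul_eq_mul, mem_prod, mem_Ico, mem_Ioo]
  refine ⟨⟨by positivity, ?_⟩, ?_, ?_⟩
  · calc ε⁻¹ * p.1 < ε⁻¹ * 1 := by gcongr
      _ ≤ _ := by rwa [mul_one]
  · rw [inv_mul_eq_div, lt_div_iff₀ hε]; linarith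
  · rw [inv_mul_eq_div, div_lt_iff₀ hε]; linarith

theorem setLIntegral_comp_inv_smul_le {G : ℝ × ℝ → ℝ≥0∞} {L a b ε : ℝ}
    (hL : 0 < L) (hper : ∀ y z, G (y + L, z) = G (y, z)) (hε : 0 < ε) {R : Set (ℝ × ℝ)}
    (hR : R ⊆ Ioo 0 1 ×ˢ Ioo (-(ε * a)) (ε * b)) :
    ∫⁻ p in R, G (ε⁻¹ • p)
      ≤ ENNReal.ofReal (ε ^ 2 * ⌈(ε * L)⁻¹⌉₊) * ∫⁻ p in Ioo 0 L ×ˢ Ioo (-a) b, G p :=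
  calc ∫⁻ p in R, G (ε⁻¹ • p)
      ≤ ∫⁻ p in (ε⁻¹ • ·) ⁻¹' (Ico 0 (⌈(ε * L)⁻¹⌉₊ * L) ×ˢ Ioo (-a) b), G (ε⁻¹ • p) :=
        lintegral_mono_set (hR.trans (Ioo_prod_Ioo_subset_preimage_inv_smul hε hL))
    _ = _ := by
        rw [Measure.setLIntegral_comp_smul_preimage volume (inv_ne_zero hε.ne'),
          setLIntegral_Ico_nat_mul_prod hL.le hper measurableSet_Ioo,
          ← restrict_Ioo_prod_eq_restrict_Ico_prod, ENNReal.ofReal_mul (by positivity),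
          ENNReal.ofReal_natCast, mul_assoc]
        simp [Module.finrank_prod]

theorem stmt_8_general (L b₁ G₁ : ℝ) (hL : 0 < L)
    (F : ℝ × ℝ → ℝ) (hF : Measurable F)
    (hper : ∀ y z : ℝ, F (y + L, z) = F (y, z))
    (hint : IntegrableOn (fun p => F p ^ 2) (Ioo 0 L ×ˢ Ioo (-b₁) G₁)) :
    ∀ ε ∈ Ioc (0 : ℝ) 1, ∀ R : Set (ℝ × ℝ), MeasurableSet R →
      R ⊆ Ioo (0 : ℝ) 1 ×ˢ Ioo (-(ε * b₁)) (ε * G₁) →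
      ∫ p in R, F (p.1 / ε, p.2 / ε) ^ 2
        ≤ ε * (1 / L + 1) * ∫ p in Ioo 0 L ×ˢ Ioo (-b₁) G₁, F p ^ 2 := by
  rintro ε ⟨hε, hε1⟩ R - hR
  set S := Ioo 0 L ×ˢ Ioo (-b₁) G₁
  let G : ℝ × ℝ → ℝ≥0∞ := fun p => ENNReal.ofReal (F p ^ 2)
  have hLHS : ∫ p in R, F (p.1 / ε, p.2 / ε) ^ 2 = (∫⁻ p in R, G (ε⁻¹ • p)).toReal := by
    rw [integral_eq_lintegral_of_nonneg_ae (.of_forall fun _ => sq_nonneg _)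
      (by fun_prop : Measurable fun p : ℝ × ℝ => F (p.1 / ε, p.2 / ε) ^ 2).aestronglyMeasurable]
    simp [G, div_eq_inv_mul, Prod.smul_def]
  have hRHS : ∫ p in S, F p ^ 2 = (∫⁻ p in S, G p).toReal :=
    integral_eq_lintegral_of_nonneg_ae (.of_forall fun _ => sq_nonneg _)
      (hF.pow_const 2).aestronglyMeasurable
  have hfin : ∫⁻ p in S, G p ≠ ⊤ := hint.lintegral_lt_top.ne
  calc ∫ p in R, F (p.1 / ε, p.2 / ε) ^ 2
      ≤ (ENNReal.ofReal (ε ^ 2 * ⌈(ε * L)⁻¹⌉₊) * ∫⁻ p in S, G p).toReal :=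
        hLHS ▸ ENNReal.toReal_mono (by finiteness) (setLIntegral_comp_inv_smul_le
          hL (fun y z => by simp only [G, hper]) hε hR)
    _ = ε ^ 2 * ⌈(ε * L)⁻¹⌉₊ * ∫ p in S, F p ^ 2 := by
        rw [ENNReal.toReal_mul, ENNReal.toReal_ofReal (by positivity), hRHS]
    _ ≤ ε * (1 / L + 1) * ∫ p in S, F p ^ 2 :=
        mul_le_mul_of_nonneg_right (sq_mul_natCeil_inv_mul_le hε hε1 hL)
          (integral_nonneg fun _ => sq_nonneg _)

/-- Scaling estimate for an `L`-periodic square-integrable function rescaled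
into a thin strip: for every `ε ∈ (0,1]` and every measurable
`R ⊆ (0,1) × (-ε b₁, ε G₁)`, `∫_R F(x₁/ε, x₂/ε)² ≤ ε (1/L + 1) M` where
`M = ∫_{(0,L)×(-b₁,G₁)} F²`. -/
theorem stmt_8 (L b₁ G₁ : ℝ) (hL : 0 < L) (hb₁ : 0 ≤ b₁) (hG₁ : 0 < G₁)
    (F : ℝ × ℝ → ℝ) (hF : Measurable F)
    (hper : ∀ y z : ℝ, F (y + L, z) = F (y, z))
    (hint : IntegrableOn (fun p => F p ^ 2) (Ioo 0 L ×ˢ Ioo (-b₁) G₁)) :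
    ∀ ε ∈ Ioc (0 : ℝ) 1, ∀ R : Set (ℝ × ℝ), MeasurableSet R →
      R ⊆ Ioo (0 : ℝ) 1 ×ˢ Ioo (-(ε * b₁)) (ε * G₁) →
      ∫ p in R, F (p.1 / ε, p.2 / ε) ^ 2
        ≤ ε * (1 / L + 1) * ∫ p in Ioo 0 L ×ˢ Ioo (-b₁) G₁, F p ^ 2 :=
  stmt_8_general L b₁ G₁ hL F hF hper hint
end

section
/- Let L > 0 and let Φ : [0,1] × ℝ → ℝ be continuous and L-periodic in its second variable (Φ(x, s + L) = Φ(x, s) for all x, s), and let h ∈ L¹(0,1). Then ∫₀¹ h(x) Φ(x, x/ε) dx → ∫₀¹ h(x) ( (1/L) ∫₀^L Φ(x, s) ds ) dx as ε → 0⁺. -/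
/-!
For a single continuous `L`-periodic profile `ψ`, subtracting its mean `m` leaves a periodic,
hence bounded, primitive `F`, and `∫_a^b ψ (x/ε) dx = (b - a) m + ε (F (b/ε) - F (a/ε))`.
For a jointly continuous `Ψ (x, s)` one freezes the slow variable `x` on a fine partition of
`[a, b]`; uniform continuity in `x` (uniform in `s`, by periodicity and compactness) makes the
freezing error small on both sides. Finally `h ∈ L¹` is approximated by continuous `g`, the
error being controlled by `‖h - g‖₁ · sup |Φ|`, and `Φ` is made continuous on all of `ℝ × ℝ` by
clamping its first variable to `[0, 1]`.
-/

open MeasureTheory Set Filter Topology Function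

lemma Filter.tendsto_nhds_of_forall_approx {α β : Type*} [PseudoMetricSpace β] {l : Filter α}
    {f : α → β} {y : β}
    (H : ∀ δ > 0, ∃ (g : α → β) (z : β), Tendsto g l (𝓝 z) ∧
      (∀ᶠ a in l, dist (f a) (g a) ≤ δ) ∧ dist y z ≤ δ) :
    Tendsto f l (𝓝 y) := by
  refine Metric.tendsto_nhds.mpr fun η hη => ?_
  obtain ⟨g, z, hg, hfg, hyz⟩ := H (η / 4) (by positivity)
  filter_upwards [hfg, Metric.tendsto_nhds.mp hg (η / 4) (by positivity)] with a hfga hgz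
  calc dist (f a) y ≤ dist (f a) (g a) + dist (g a) z + dist z y := dist_triangle4 _ _ _ _
    _ < η := by linarith [dist_comm y z]

section PeriodicAverage

variable {L : ℝ}

lemma abs_average_le {f : ℝ → ℝ} {C : ℝ} (hL : 0 < L) (hf : ∀ s, |f s| ≤ C) :
    |(1 / L) * ∫ s in 0..L, f s| ≤ C := by
  have hint : ‖∫ s in 0..L, f s‖ ≤ C * |L - 0| :=
    intervalIntegral.norm_integral_le_of_norm_le_const fun s _ => hf s
  rw [Real.norm_eq_abs, sub_zero, abs_of_pos hL] at hint
  rw [abs_mul, abs_of_pos (by positivity)]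
  calc 1 / L * |∫ s in 0..L, f s| ≤ 1 / L * (C * L) := by gcongr
    _ = C := by field_simp

lemma Function.Periodic.periodic_primitive_of_integral_eq_zero {g : ℝ → ℝ} (hg : Continuous g)
    (hper : Periodic g L) (h0 : ∫ s in 0..L, g s = 0) :
    Periodic (fun t => ∫ s in 0..t, g s) L := fun t => by
  show ∫ s in 0..t + L, g s = ∫ s in 0..t, g s
  rw [hper.intervalIntegral_add_eq_add 0 t hg.intervalIntegrable, zero_add, h0, add_zero]

lemma tendsto_intervalIntegral_comp_div_of_periodic {ψ : ℝ → ℝ} (hL : 0 < L)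
    (hψ : Continuous ψ) (hper : Periodic ψ L) (a b : ℝ) :
    Tendsto (fun ε => ∫ x in a..b, ψ (x / ε)) (𝓝[>] 0)
      (𝓝 ((b - a) * ((1 / L) * ∫ s in 0..L, ψ s))) := by
  set m := (1 / L) * ∫ s in 0..L, ψ s with hm
  have hg : Continuous fun s => ψ s - m := hψ.sub continuous_const
  set F : ℝ → ℝ := fun t => ∫ s in 0..t, (ψ s - m)
  have hF : Periodic F L := by
    refine Periodic.periodic_primitive_of_integral_eq_zero hg (fun s => by simp only [hper s]) ?_
    rw [intervalIntegral.integral_sub (hψ.intervalIntegrable 0 L) intervalIntegrable_const,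
      intervalIntegral.integral_const, smul_eq_mul, sub_zero, hm]
    field_simp
    ring
  obtain ⟨C, hC⟩ := (hF.isBounded_of_continuous hL.ne'
    (intervalIntegral.continuous_primitive (fun _ _ => hg.intervalIntegrable _ _) 0)).exists_norm_le
  have hsplit : ∀ ε ≠ 0, ∫ x in a..b, ψ (x / ε) = (b - a) * m + ε * (F (b / ε) - F (a / ε)) := by
    intro ε hε
    have hcomp := intervalIntegral.integral_comp_div (a := a) (b := b) (fun s => ψ s - m) hε
    have hψε : Continuous fun x => ψ (x / ε) := hψ.comp (continuous_id.div_const ε)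
    rw [intervalIntegral.integral_sub (hψε.intervalIntegrable _ _) intervalIntegrable_const,
      intervalIntegral.integral_const, smul_eq_mul, smul_eq_mul,
      ← intervalIntegral.integral_interval_sub_left (a := 0) (hg.intervalIntegrable _ _)
        (hg.intervalIntegrable _ _)] at hcomp
    linarith
  have hsmall : Tendsto (fun ε : ℝ => ε * (F (b / ε) - F (a / ε))) (𝓝[>] 0) (𝓝 0) := by
    refine (tendsto_nhdsWithin_of_tendsto_nhds tendsto_id).zero_mul_isBoundedUnder_le
      (isBoundedUnder_of ⟨2 * C, fun ε => ?_⟩)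
    calc ‖F (b / ε) - F (a / ε)‖ ≤ ‖F (b / ε)‖ + ‖F (a / ε)‖ := norm_sub_le _ _
      _ ≤ 2 * C := by linarith [hC _ (mem_range_self (b / ε)), hC _ (mem_range_self (a / ε))]
  have hlim := hsmall.const_add ((b - a) * m)
  rw [add_zero] at hlim
  exact hlim.congr' (eventually_nhdsWithin_of_forall fun ε hε => (hsplit ε (ne_of_gt hε)).symm)

end PeriodicAverage

section FiberwisePeriodic

variable {α : Type*} {L : ℝ} {Φ : α × ℝ → ℝ}

lemma apply_toIcoMod_snd (hL : 0 < L) (hper : ∀ x s, Φ (x, s + L) = Φ (x, s)) (x : α) (s : ℝ) :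
    Φ (x, toIcoMod hL 0 s) = Φ (x, s) :=
  (show Periodic (fun s => Φ (x, s)) L from hper x).sub_zsmul_eq _

lemma toIcoMod_zero_mem_Icc (hL : 0 < L) (s : ℝ) : toIcoMod hL 0 s ∈ Icc 0 L := by
  simpa using Ico_subset_Icc_self (toIcoMod_mem_Ico hL 0 s)

lemma exists_forall_abs_le_of_continuousOn_prod_univ [TopologicalSpace α] {K : Set α}
    (hK : IsCompact K) (hL : 0 < L) (hΦ : ContinuousOn Φ (K ×ˢ univ))
    (hper : ∀ x s, Φ (x, s + L) = Φ (x, s)) :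
    ∃ M, ∀ x ∈ K, ∀ s, |Φ (x, s)| ≤ M := by
  obtain ⟨M, hM⟩ := (hK.prod isCompact_Icc).exists_bound_of_continuousOn
    (hΦ.mono (prod_mono_right (subset_univ (Icc 0 L))))
  refine ⟨M, fun x hx s => ?_⟩
  rw [← apply_toIcoMod_snd hL hper]
  exact hM (x, _) ⟨hx, toIcoMod_zero_mem_Icc hL s⟩

lemma exists_forall_abs_sub_lt_of_continuousOn_prod_univ [PseudoMetricSpace α] {K : Set α}
    (hK : IsCompact K) (hL : 0 < L) (hΦ : ContinuousOn Φ (K ×ˢ univ))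
    (hper : ∀ x s, Φ (x, s + L) = Φ (x, s)) {δ : ℝ} (hδ : 0 < δ) :
    ∃ r > 0, ∀ x ∈ K, ∀ y ∈ K, dist x y < r → ∀ s, |Φ (x, s) - Φ (y, s)| < δ := by
  have hunif := (hK.prod isCompact_Icc).uniformContinuousOn_of_continuous
    (hΦ.mono (prod_mono_right (subset_univ (Icc 0 L))))
  obtain ⟨r, hr, hΦr⟩ := Metric.uniformContinuousOn_iff.mp hunif δ hδ
  refine ⟨r, hr, fun x hx y hy hxy s => ?_⟩
  rw [← apply_toIcoMod_snd hL hper x, ← apply_toIcoMod_snd hL hper y, ← Real.dist_eq]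
  refine hΦr (x, _) ⟨hx, toIcoMod_zero_mem_Icc hL s⟩ (y, _) ⟨hy, toIcoMod_zero_mem_Icc hL s⟩ ?_
  simpa [Prod.dist_eq] using hxy

end FiberwisePeriodic

lemma abs_intervalIntegral_sub_sum_le {t : ℕ → ℝ} (ht : Monotone t) {n : ℕ} {u : ℝ → ℝ}
    {v : ℕ → ℝ → ℝ} {δ : ℝ}
    (hu : ∀ i < n, IntervalIntegrable u volume (t i) (t (i + 1)))
    (hv : ∀ i < n, IntervalIntegrable (v i) volume (t i) (t (i + 1)))
    (huv : ∀ i < n, ∀ x ∈ Icc (t i) (t (i + 1)), |u x - v i x| ≤ δ) :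
    |(∫ x in t 0..t n, u x) - ∑ i ∈ Finset.range n, ∫ x in t i..t (i + 1), v i x|
      ≤ δ * (t n - t 0) := by
  rw [← intervalIntegral.sum_integral_adjacent_intervals hu, ← Finset.sum_sub_distrib,
    ← Finset.sum_range_sub t, Finset.mul_sum]
  refine (Finset.abs_sum_le_sum_abs _ _).trans (Finset.sum_le_sum fun i hi => ?_)
  have hi : i < n := Finset.mem_range.mp hi
  have hti : t i ≤ t (i + 1) := ht i.le_succ
  rw [← intervalIntegral.integral_sub (hu i hi) (hv i hi)]
  have hbound := intervalIntegral.norm_integral_le_of_norm_le_const (C := δ)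
    (f := fun x => u x - v i x) fun x hx =>
      huv i hi x (Ioc_subset_Icc_self (by rwa [uIoc_of_le hti] at hx))
  rwa [Real.norm_eq_abs, abs_of_nonneg (sub_nonneg.mpr hti)] at hbound

lemma exists_partition_mesh_lt {a b r : ℝ} (hab : a ≤ b) (hr : 0 < r) :
    ∃ (N : ℕ) (t : ℕ → ℝ), Monotone t ∧ t 0 = a ∧ t N = b ∧
      ∀ i < N, ∀ x ∈ Icc (t i) (t (i + 1)), x ∈ Icc a b ∧ dist x (t i) < r := by
  obtain ⟨N, hN⟩ := exists_nat_gt ((b - a) / r)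
  have hNpos : (0 : ℝ) < N := (div_nonneg (sub_nonneg.mpr hab) hr.le).trans_lt hN
  have hmesh : (b - a) / N < r := by
    rw [div_lt_iff₀ hNpos]; rw [div_lt_iff₀ hr] at hN; linarith
  set t : ℕ → ℝ := fun i => a + i * ((b - a) / N)
  have ht : Monotone t := fun i j hij => by
    have : (i : ℝ) ≤ j := by exact_mod_cast hij
    simp only [t]
    gcongr
  have ht0 : t 0 = a := by simp [t]
  have htN : t N = b := by simp only [t]; field_simp; ring
  refine ⟨N, t, ht, ht0, htN, fun i hi x hx => ⟨⟨?_, ?_⟩, ?_⟩⟩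
  · exact ht0 ▸ (ht (Nat.zero_le i)).trans hx.1
  · exact htN ▸ hx.2.trans (ht hi)
  · have hstep : t (i + 1) = t i + (b - a) / N := by simp only [t]; push_cast; ring
    rw [Real.dist_eq, abs_of_nonneg (by linarith [hx.1])]
    linarith [hx.2]

lemma tendsto_intervalIntegral_comp_div_of_continuous {L a b : ℝ} {Ψ : ℝ × ℝ → ℝ} (hL : 0 < L)
    (hΨ : Continuous Ψ) (hper : ∀ x s, Ψ (x, s + L) = Ψ (x, s)) (hab : a ≤ b) :
    Tendsto (fun ε => ∫ x in a..b, Ψ (x, x / ε)) (𝓝[>] 0)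
      (𝓝 (∫ x in a..b, (1 / L) * ∫ s in 0..L, Ψ (x, s))) := by
  set m : ℝ → ℝ := fun x => (1 / L) * ∫ s in 0..L, Ψ (x, s) with hm_def
  have hm : Continuous m := continuous_const.mul
    (intervalIntegral.continuous_parametric_intervalIntegral_of_continuous'
      (f := fun x s => Ψ (x, s)) hΨ 0 L)
  refine Filter.tendsto_nhds_of_forall_approx fun δ hδ => ?_
  set δ' := δ / (b - a + 1)
  have hδ' : δ' * (b - a) ≤ δ := by
    rw [div_mul_eq_mul_div, div_le_iff₀ (by linarith)]
    nlinarith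
  obtain ⟨r, hr, hΨr⟩ := exists_forall_abs_sub_lt_of_continuousOn_prod_univ isCompact_Icc hL
    hΨ.continuousOn hper (δ := δ') (by positivity)
  obtain ⟨N, t, ht, ht0, htN, hpiece⟩ := exists_partition_mesh_lt hab hr
  have hfrozen : ∀ i < N, ∀ x ∈ Icc (t i) (t (i + 1)), ∀ s, |Ψ (x, s) - Ψ (t i, s)| ≤ δ' :=
    fun i hi x hx s => (hΨr _ (hpiece i hi x hx).1 _
      (hpiece i hi (t i) ⟨le_rfl, ht i.le_succ⟩).1 (hpiece i hi x hx).2 s).le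
  have hmean : ∀ i < N, ∀ x ∈ Icc (t i) (t (i + 1)), |m x - m (t i)| ≤ δ' := by
    intro i hi x hx
    have hint : ∀ y, IntervalIntegrable (fun s => Ψ (y, s)) volume 0 L := fun y =>
      (hΨ.comp (Continuous.prodMk_right y)).intervalIntegrable _ _
    rw [hm_def, ← mul_sub, ← intervalIntegral.integral_sub (hint x) (hint (t i))]
    exact abs_average_le hL (hfrozen i hi x hx)
  refine ⟨fun ε => ∑ i ∈ Finset.range N, ∫ x in t i..t (i + 1), Ψ (t i, x / ε),
    ∑ i ∈ Finset.range N, (t (i + 1) - t i) * m (t i), ?_, ?_, ?_⟩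
  · exact tendsto_finsetSum _ fun i _ => tendsto_intervalIntegral_comp_div_of_periodic hL
      (hΨ.comp (Continuous.prodMk_right (t i))) (fun s => hper (t i) s) _ _
  · refine Eventually.of_forall fun ε => (le_trans ?_ hδ')
    rw [Real.dist_eq, ← ht0, ← htN]
    exact abs_intervalIntegral_sub_sum_le ht
      (fun i _ => (by fun_prop : Continuous fun x => Ψ (x, x / ε)).intervalIntegrable _ _)
      (fun i _ => (by fun_prop : Continuous fun x => Ψ (t i, x / ε)).intervalIntegrable _ _)
      fun i hi x hx => hfrozen i hi x hx _
  · refine le_trans ?_ hδ'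
    simp only [← smul_eq_mul, ← intervalIntegral.integral_const]
    rw [Real.dist_eq, ← ht0, ← htN]
    exact abs_intervalIntegral_sub_sum_le ht (fun i _ => hm.intervalIntegrable _ _)
      (fun i _ => intervalIntegrable_const) hmean

lemma abs_integral_mul_sub_integral_mul_le {α : Type*} [MeasurableSpace α] {μ : Measure α}
    {h g φ : α → ℝ} {M : ℝ} (hh : Integrable h μ) (hg : Integrable g μ)
    (hφ : AEStronglyMeasurable φ μ) (hφM : ∀ᵐ x ∂μ, ‖φ x‖ ≤ M) :
    |(∫ x, h x * φ x ∂μ) - ∫ x, g x * φ x ∂μ| ≤ (∫ x, ‖h x - g x‖ ∂μ) * M := by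
  rw [← integral_sub (hh.mul_bdd hφ hφM) (hg.mul_bdd hφ hφM), ← integral_mul_const,
    ← Real.norm_eq_abs]
  refine norm_integral_le_of_norm_le ((hh.sub hg).norm.mul_const M) ?_
  filter_upwards [hφM] with x hx
  rw [← sub_mul, norm_mul]
  gcongr

lemma tendsto_intervalIntegral_mul_comp_div {L a b : ℝ} {Φ : ℝ × ℝ → ℝ} {h : ℝ → ℝ}
    (hL : 0 < L) (hΦ : Continuous Φ) (hper : ∀ x s, Φ (x, s + L) = Φ (x, s)) (hab : a ≤ b)
    (hh : IntegrableOn h (Ioc a b)) :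
    Tendsto (fun ε => ∫ x in a..b, h x * Φ (x, x / ε)) (𝓝[>] 0)
      (𝓝 (∫ x in a..b, h x * ((1 / L) * ∫ s in 0..L, Φ (x, s)))) := by
  set m : ℝ → ℝ := fun x => (1 / L) * ∫ s in 0..L, Φ (x, s)
  have hm : Continuous m := continuous_const.mul
    (intervalIntegral.continuous_parametric_intervalIntegral_of_continuous'
      (f := fun x s => Φ (x, s)) hΦ 0 L)
  obtain ⟨M, hM⟩ := exists_forall_abs_le_of_continuousOn_prod_univ isCompact_Icc hL
    hΦ.continuousOn hper (K := Icc a b)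
  have hM0 : 0 ≤ M := (abs_nonneg _).trans (hM a ⟨le_rfl, hab⟩ 0)
  have hΦM : ∀ ε : ℝ, ∀ᵐ x ∂volume.restrict (Ioc a b), ‖Φ (x, x / ε)‖ ≤ M := fun ε =>
    ae_restrict_of_forall_mem measurableSet_Ioc fun x hx => hM x (Ioc_subset_Icc_self hx) _
  have hmM : ∀ᵐ x ∂volume.restrict (Ioc a b), ‖m x‖ ≤ M :=
    ae_restrict_of_forall_mem measurableSet_Ioc fun x hx =>
      abs_average_le hL (hM x (Ioc_subset_Icc_self hx))
  have hΦε : ∀ ε : ℝ, Continuous fun x => Φ (x, x / ε) := fun ε =>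
    hΦ.comp (continuous_id.prodMk (continuous_id.div_const ε))
  refine Filter.tendsto_nhds_of_forall_approx fun δ hδ => ?_
  obtain ⟨g, -, hhg, hg, hgi⟩ := Integrable.exists_hasCompactSupport_integral_sub_le hh
    (ε := δ / (M + 1)) (by positivity)
  have hδM : (∫ x in Ioc a b, ‖h x - g x‖) * M ≤ δ := by
    calc (∫ x in Ioc a b, ‖h x - g x‖) * M ≤ δ / (M + 1) * M := by gcongr
      _ ≤ δ := by rw [div_mul_eq_mul_div, div_le_iff₀ (by linarith)]; nlinarith
  refine ⟨fun ε => ∫ x in a..b, g x * Φ (x, x / ε), ∫ x in a..b, g x * m x, ?_, ?_, ?_⟩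
  · have hlim := tendsto_intervalIntegral_comp_div_of_continuous (Ψ := fun p => g p.1 * Φ p) hL
      ((hg.comp continuous_fst).mul hΦ) (fun x s => by simp only [hper]) hab
    have hmean : ∫ x in a..b, g x * m x = ∫ x in a..b, (1 / L) * ∫ s in 0..L, g x * Φ (x, s) :=
      intervalIntegral.integral_congr fun x _ => by
        simp only [m, intervalIntegral.integral_const_mul]
        ring
    rw [hmean]
    exact hlim
  · refine Eventually.of_forall fun ε => ?_
    simp only [Real.dist_eq, intervalIntegral.integral_of_le hab]
    exact (abs_integral_mul_sub_integral_mul_le hh hgi (hΦε ε).aestronglyMeasurable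
      (hΦM ε)).trans hδM
  · simp only [Real.dist_eq, intervalIntegral.integral_of_le hab]
    exact (abs_integral_mul_sub_integral_mul_le hh hgi hm.aestronglyMeasurable hmM).trans hδM

lemma ContinuousOn.comp_projIcc_fst {β γ : Type*} [TopologicalSpace β] [TopologicalSpace γ]
    {a b : ℝ} (hab : a ≤ b) {Φ : ℝ × β → γ} (hΦ : ContinuousOn Φ (Icc a b ×ˢ univ)) :
    Continuous fun p : ℝ × β => Φ (projIcc a b hab p.1, p.2) :=
  hΦ.comp_continuous ((continuous_subtype_val.comp (continuous_projIcc.comp continuous_fst)).prodMk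
    continuous_snd) fun p => ⟨(projIcc a b hab p.1).2, mem_univ _⟩

/-- Locally periodic averaging: if `Φ : [0,1] × ℝ → ℝ` is continuous and
`L`-periodic in its second variable and `h ∈ L¹(0,1)`, then
`∫₀¹ h(x) Φ(x, x/ε) dx → ∫₀¹ h(x) ((1/L) ∫₀^L Φ(x,s) ds) dx` as `ε → 0⁺`. -/
theorem stmt_10 (L : ℝ) (hL : 0 < L) (Φ : ℝ × ℝ → ℝ)
    (hΦc : ContinuousOn Φ (Icc 0 1 ×ˢ (univ : Set ℝ)))
    (hΦper : ∀ x s : ℝ, Φ (x, s + L) = Φ (x, s))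
    (h : ℝ → ℝ) (hh : IntegrableOn h (Ioo 0 1)) :
    Tendsto (fun ε : ℝ => ∫ x in Ioo (0 : ℝ) 1, h x * Φ (x, x / ε))
      (nhdsWithin 0 (Ioi 0))
      (nhds (∫ x in Ioo (0 : ℝ) 1, h x * ((1 / L) * ∫ s in Ioo (0 : ℝ) L, Φ (x, s)))) := by
  have key := tendsto_intervalIntegral_mul_comp_div hL (hΦc.comp_projIcc_fst zero_le_one)
    (fun x s => hΦper _ s) zero_le_one
    ((integrableOn_Ioc_iff_integrableOn_Ioo).mpr hh)
  simp only [intervalIntegral.integral_of_le zero_le_one, intervalIntegral.integral_of_le hL.le,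
    integral_Ioc_eq_integral_Ioo] at key
  have hproj : ∀ x ∈ Ioo (0 : ℝ) 1, (projIcc 0 1 zero_le_one x : ℝ) = x := fun x hx => by
    rw [projIcc_of_mem _ (Ioo_subset_Icc_self hx)]
  convert key using 2
  · exact setIntegral_congr_fun measurableSet_Ioo fun x hx => by simp only [hproj x hx]
  · exact setIntegral_congr_fun measurableSet_Ioo fun x hx => by simp only [hproj x hx]
end
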